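/- Let H be a complex Hilbert space and ϖ a positive operator-valued measure on (Ω, Σ) acting on H. Let E_1, …, E_n ∈ Σ be pairwise disjoint, α_1, …, α_n ∈ ℂ and x_1, …, x_n ∈ H. If Σ_{i=1}^n |α_i|² ⟨ϖ(E_i) x_i, x_i⟩ = 0, then Σ_{i=1}^n α_i ϖ(E ∩ E_i) x_i = 0 for every E ∈ Σ; that is, the vector measure M(E) = Σ_{i=1}^n α_i ϖ(E ∩ E_i) x_i is identically zero. -/

import Mathlib

/-! For a positive operator-valued measure `ϖ` and `F` measurable, `ϖ (F ∩ E i) ≤ ϖ (E i)` in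
the Loewner order, because the difference is `ϖ (E i \ F) ≥ 0`. The hypothesis forces
`⟪ϖ (E i) x i, x i⟫ = 0` whenever `α i ≠ 0`, since it is a sum of nonnegative terms, hence also
`⟪ϖ (F ∩ E i) x i, x i⟫ = 0`; for a positive operator `T` this means `‖√T x‖ = 0`, so `T x = 0`. -/

open ContinuousLinearMap RCLike

namespace MeasureTheory

variable {α M : Type*} [MeasurableSpace α] [AddCommGroup M] [TopologicalSpace M]
  [IsTopologicalAddGroup M] [T2Space M] {m : Set α → M}

def IsCountablyAdditive (m : Set α → M) : Prop :=
  ∀ B : ℕ → Set α, (∀ i, MeasurableSet (B i)) → Pairwise (Function.onFun Disjoint B) →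
    HasSum (fun i => m (B i)) (m (⋃ i, B i))

theorem IsCountablyAdditive.apply_empty (hm : IsCountablyAdditive m) : m ∅ = 0 := by
  have h := hm (fun _ => ∅) (fun _ => .empty) (fun _ _ _ => disjoint_bot_left)
  exact tendsto_const_nhds_iff.mp h.summable.tendsto_atTop_zero

noncomputable def IsCountablyAdditive.toVectorMeasure (hm : IsCountablyAdditive m) :
    VectorMeasure α M where
  measureOf' s := open Classical in if MeasurableSet s then m s else 0
  empty' := by simp [hm.apply_empty]
  not_measurable' _ hs := if_neg hs
  m_iUnion' B hB hdisj := by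
    simpa [hB, MeasurableSet.iUnion hB] using hm B hB hdisj

theorem IsCountablyAdditive.toVectorMeasure_apply (hm : IsCountablyAdditive m) {s : Set α}
    (hs : MeasurableSet s) : hm.toVectorMeasure s = m s :=
  if_pos hs

theorem IsCountablyAdditive.apply_sdiff (hm : IsCountablyAdditive m) {s t : Set α}
    (hs : MeasurableSet s) (ht : MeasurableSet t) (hst : s ⊆ t) : m (t \ s) = m t - m s := by
  simpa only [hm.toVectorMeasure_apply, hs, ht, ht.diff hs] using
    hm.toVectorMeasure.of_sdiff hs ht hst

end MeasureTheory

open MeasureTheory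

section OperatorValuedMeasure

variable {Ω 𝕜 E : Type*} [MeasurableSpace Ω] [RCLike 𝕜] [NormedAddCommGroup E]
  [InnerProductSpace 𝕜 E] {ϖ : Set Ω → E →L[𝕜] E}

theorem apply_mono_of_isCountablyAdditive_apply
    (hϖ : ∀ x, IsCountablyAdditive fun s => ϖ s x)
    (hϖ_nonneg : ∀ s, MeasurableSet s → 0 ≤ ϖ s) {s t : Set Ω}
    (hs : MeasurableSet s) (ht : MeasurableSet t) (hst : s ⊆ t) : ϖ s ≤ ϖ t := by
  have hsdiff : ϖ (t \ s) = ϖ t - ϖ s := ext fun x => (hϖ x).apply_sdiff hs ht hst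
  rw [le_def, ← hsdiff, ← nonneg_iff_isPositive]
  exact hϖ_nonneg _ (ht.diff hs)

end OperatorValuedMeasure

namespace ContinuousLinearMap

variable {𝕜 E : Type*} [RCLike 𝕜] [NormedAddCommGroup E] [InnerProductSpace 𝕜 E]

theorem re_inner_apply_self_le_of_le {S T : E →L[𝕜] E} (h : S ≤ T) (x : E) :
    re (inner 𝕜 (S x) x) ≤ re (inner 𝕜 (T x) x) := by
  have := ((le_def S T).1 h).re_inner_nonneg_left x
  rwa [sub_apply, inner_sub_left, map_sub, sub_nonneg] at this

variable {H : Type*} [NormedAddCommGroup H] [InnerProductSpace ℂ H] [CompleteSpace H]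

/-- Writing `T = √T * √T` turns `re ⟪T x, x⟫` into `‖√T x‖ ^ 2`. -/
theorem apply_eq_zero_of_re_inner_apply_self_eq_zero {T : H →L[ℂ] H} (hT : 0 ≤ T) {x : H}
    (hx : re (inner ℂ (T x) x) = 0) : T x = 0 := by
  set S := CFC.sqrt T
  have hS : adjoint S ∘L S = T := by
    rw [← star_eq_adjoint, (CFC.sqrt_nonneg T).isSelfAdjoint.star_eq]
    exact CFC.sqrt_mul_sqrt_self T
  have hSx : ‖S x‖ ^ 2 = 0 := by rw [apply_norm_sq_eq_inner_adjoint_left, hS, hx]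
  rw [← hS, comp_apply, norm_eq_zero.mp (pow_eq_zero_iff two_ne_zero |>.mp hSx), map_zero]

theorem apply_eq_zero_of_le_of_re_inner_apply_self_eq_zero {S T : H →L[ℂ] H} (hS : 0 ≤ S)
    (hST : S ≤ T) {x : H} (hx : re (inner ℂ (T x) x) = 0) : S x = 0 := by
  refine apply_eq_zero_of_re_inner_apply_self_eq_zero hS (le_antisymm ?_ ?_)
  · exact hx ▸ re_inner_apply_self_le_of_le hST x
  · exact ((nonneg_iff_isPositive S).1 hS).re_inner_nonneg_left x

end ContinuousLinearMap

theorem povm_null_gram_sum_implies_zero_vector_measure_general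
    {Ω : Type*} [MeasurableSpace Ω]
    {H : Type*} [NormedAddCommGroup H] [InnerProductSpace ℂ H] [CompleteSpace H]
    -- a positive operator-valued measure ϖ on (Ω, Σ) acting on H
    (ϖ : Set Ω → H →L[ℂ] H)
    (hϖ_add : ∀ B : ℕ → Set Ω, (∀ i, MeasurableSet (B i)) → Pairwise (Function.onFun Disjoint B) →
      ∀ x : H, HasSum (fun i => ϖ (B i) x) (ϖ (⋃ i, B i) x))
    (hϖ_pos : ∀ E : Set Ω, MeasurableSet E → ∀ x : H,
      0 ≤ (inner ℂ (ϖ E x) x : ℂ).re ∧ (inner ℂ (ϖ E x) x : ℂ).im = 0)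
    (n : ℕ) (α : Fin n → ℂ) (x : Fin n → H) (E : Fin n → Set Ω)
    (hE_meas : ∀ i, MeasurableSet (E i))
    (hzero : ∑ i, ((‖α i‖ : ℂ) ^ 2) * (inner ℂ (ϖ (E i) (x i)) (x i) : ℂ) = 0) :
    ∀ F : Set Ω, MeasurableSet F → ∑ i, α i • ϖ (F ∩ E i) (x i) = 0 := by
  intro F hF
  have hϖ : ∀ x, IsCountablyAdditive fun s => ϖ s x := fun x B hB hdisj => hϖ_add B hB hdisj x
  have hϖ_nonneg (s : Set Ω) (hs : MeasurableSet s) : 0 ≤ ϖ s :=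
    (nonneg_iff_isPositive _).2 <| (isPositive_iff_complex _).2 fun y =>
      ⟨Complex.ext rfl (hϖ_pos s hs y).2.symm, (hϖ_pos s hs y).1⟩
  have hsum : ∑ i, ‖α i‖ ^ 2 * re (inner ℂ (ϖ (E i) (x i)) (x i)) = 0 := by
    simpa [← Complex.ofReal_pow, Complex.re_sum] using congrArg Complex.re hzero
  have hterms := (Finset.sum_eq_zero_iff_of_nonneg fun i _ =>
    mul_nonneg (sq_nonneg _) (hϖ_pos (E i) (hE_meas i) (x i)).1).1 hsum
  refine Finset.sum_eq_zero fun i _ => ?_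
  rcases mul_eq_zero.1 (hterms i (Finset.mem_univ i)) with hα | hEi
  · rw [show α i = 0 by simpa using hα, zero_smul]
  · rw [apply_eq_zero_of_le_of_re_inner_apply_self_eq_zero (hϖ_nonneg _ (hF.inter (hE_meas i)))
      (apply_mono_of_isCountablyAdditive_apply hϖ hϖ_nonneg (hF.inter (hE_meas i)) (hE_meas i)
        Set.inter_subset_right) hEi, smul_zero]

/-- For a positive operator-valued measure `ϖ` on a complex Hilbert
space and pairwise disjoint sets `E_i`, if `Σ_i |α_i|² ⟨ϖ(E_i) x_i, x_i⟩ = 0`, then the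
vector measure `M(E) = Σ_i α_i ϖ(E ∩ E_i) x_i` vanishes identically. -/
theorem povm_null_gram_sum_implies_zero_vector_measure
    {Ω : Type*} [MeasurableSpace Ω]
    {H : Type*} [NormedAddCommGroup H] [InnerProductSpace ℂ H] [CompleteSpace H]
    -- a positive operator-valued measure ϖ on (Ω, Σ) acting on H
    (ϖ : Set Ω → H →L[ℂ] H)
    (hϖ_add : ∀ B : ℕ → Set Ω, (∀ i, MeasurableSet (B i)) → Pairwise (Function.onFun Disjoint B) →
      ∀ x : H, HasSum (fun i => ϖ (B i) x) (ϖ (⋃ i, B i) x))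
    (hϖ_pos : ∀ E : Set Ω, MeasurableSet E → ∀ x : H,
      0 ≤ (inner ℂ (ϖ E x) x : ℂ).re ∧ (inner ℂ (ϖ E x) x : ℂ).im = 0)
    (n : ℕ) (α : Fin n → ℂ) (x : Fin n → H) (E : Fin n → Set Ω)
    (hE_meas : ∀ i, MeasurableSet (E i))
    (hE_disj : ∀ i j, i ≠ j → Disjoint (E i) (E j))
    (hzero : ∑ i, ((‖α i‖ : ℂ) ^ 2) * (inner ℂ (ϖ (E i) (x i)) (x i) : ℂ) = 0) :
    ∀ F : Set Ω, MeasurableSet F → ∑ i, α i • ϖ (F ∩ E i) (x i) = 0 :=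
  povm_null_gram_sum_implies_zero_vector_measure_general ϖ hϖ_add hϖ_pos n α x E hE_meas hzero
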